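/- Let X be a separable Banach space, (x_n) a dense sequence in its unit ball, and T : ℓ₂ → X defined by T((a_n)) = Σ_n a_n x_n / 2ⁿ. Let ‖·‖_s be the equivalent norm on X whose unit ball is V = B_X + T(B_{ℓ₂}). Then: (i) V is closed, bounded, balanced and convex with nonempty interior; (ii) the dual norm satisfies ‖f‖_s = ‖f‖ + ‖T* f‖₂ for all f ∈ X*; (iii) the set of norm-attaining functionals satisfies NA(X, ‖·‖_s) = NA(X, ‖·‖); (iv) (X, ‖·‖_s)* is strictly convex, hence (X, ‖·‖_s) is smooth. -/

import Mathlib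

/-!
The set `T(B_{ℓ₂})` is compact: the coefficient sequences of the unit ball of `ℓ₂` form a compact
subset of `ℝ^ℕ` for the product topology, on which the defining series of `T` converges uniformly.
Hence `V = B_X + T(B_{ℓ₂})` is closed. The supremum of `f` over a sum of sets is the sum of its
suprema, which gives `sup_V f = ‖f‖ + ‖T* f‖`; likewise `f` attains its maximum on `V` iff it does
on `B_X` and on the compact set `T(B_{ℓ₂})`, where it always does. Finally `T` has dense range,
so `T*` is injective, and the dual of the Hilbert space `ℓ₂` is strictly convex: equality in
`sup_V (f + g) ≤ sup_V f + sup_V g` forces `T* f, T* g`, hence `f, g`, onto one ray. This strict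
convexity of the dual norm makes the supporting functional at each boundary point of `V` unique.
-/

open Metric Set ENNReal Pointwise

section Compactness

variable {ι : Type*}

theorem norm_le_one_of_forall_sum_rpow_le_one {q : ℝ} (hq : 0 < q) {c : ι → ℝ}
    (hc : ∀ s : Finset ι, ∑ i ∈ s, ‖c i‖ ^ q ≤ 1) (i : ι) : ‖c i‖ ≤ 1 := by
  have := hc {i}
  rw [Finset.sum_singleton] at this
  exact not_lt.1 fun h => (Real.one_lt_rpow h hq).not_ge this

theorem isCompact_setOf_forall_sum_rpow_le_one {q : ℝ} (hq : 0 < q) :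
    IsCompact {c : ι → ℝ | ∀ s : Finset ι, ∑ i ∈ s, ‖c i‖ ^ q ≤ 1} := by
  refine (isCompact_univ_pi fun _ => isCompact_closedBall (0 : ℝ) 1).of_isClosed_subset ?_
    fun c hc i _ => mem_closedBall_zero_iff.2 (norm_le_one_of_forall_sum_rpow_le_one hq hc i)
  simp only [ofPred_forall]
  exact isClosed_iInter fun s => isClosed_le (by fun_prop (disch := positivity)) continuous_const

theorem lp.coeFn_image_closedBall {p : ℝ≥0∞} [Fact (1 ≤ p)] (hp : 0 < p.toReal) :
    (fun a : lp (fun _ : ι => ℝ) p => (a : ι → ℝ)) '' closedBall 0 1 =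
      {c | ∀ s : Finset ι, ∑ i ∈ s, ‖c i‖ ^ p.toReal ≤ 1} := by
  ext c
  constructor
  · rintro ⟨a, ha, rfl⟩ s
    calc ∑ i ∈ s, ‖a i‖ ^ p.toReal ≤ ‖a‖ ^ p.toReal := lp.sum_rpow_le_norm_rpow hp a s
      _ ≤ 1 := Real.rpow_le_one (norm_nonneg a) (mem_closedBall_zero_iff.1 ha) hp.le
  · intro hc
    refine ⟨⟨c, memℓp_gen' hc⟩, mem_closedBall_zero_iff.2 ?_, rfl⟩
    exact lp.norm_le_of_forall_sum_le hp zero_le_one fun s => by simpa using hc s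

variable {X : Type*} [NormedAddCommGroup X] [NormedSpace ℝ X] [CompleteSpace X]

theorem isCompact_image_closedBall_tsum_smul {p : ℝ≥0∞} [Fact (1 ≤ p)] (hp : 0 < p.toReal)
    {y : ι → X} (hy : Summable fun i => ‖y i‖) :
    IsCompact ((fun a : lp (fun _ : ι => ℝ) p => ∑' i, a i • y i) '' closedBall 0 1) := by
  rw [show (fun a : lp (fun _ : ι => ℝ) p => ∑' i, a i • y i) =
      (fun c : ι → ℝ => ∑' i, c i • y i) ∘ (fun a : lp (fun _ : ι => ℝ) p => (a : ι → ℝ))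
      from rfl, image_comp, lp.coeFn_image_closedBall hp]
  refine (isCompact_setOf_forall_sum_rpow_le_one hp).image_of_continuousOn ?_
  refine continuousOn_tsum (fun i => by fun_prop) hy fun i c hc => ?_
  rw [norm_smul]
  exact mul_le_of_le_one_left (norm_nonneg _) (norm_le_one_of_forall_sum_rpow_le_one hp hc i)

end Compactness

theorem LinearMap.denseRange_of_nonempty_interior_closure_range {𝕜 E F : Type*}
    [NontriviallyNormedField 𝕜] [AddCommGroup E] [Module 𝕜 E] [AddCommGroup F] [Module 𝕜 F]
    [TopologicalSpace F] [IsTopologicalAddGroup F] [ContinuousSMul 𝕜 F] (f : E →ₗ[𝕜] F)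
    (h : (interior (closure (Set.range f))).Nonempty) : DenseRange f := by
  have := (LinearMap.range f).topologicalClosure.eq_top_of_nonempty_interior'
    (by rwa [Submodule.topologicalClosure_coe, LinearMap.coe_range])
  rw [denseRange_iff_closure_range, ← LinearMap.coe_range, ← Submodule.topologicalClosure_coe,
    this, Submodule.top_coe]

theorem isMaxOn_iff_eq_csSup {α β : Type*} [ConditionallyCompleteLattice β] {f : α → β}
    {s : Set α} {x : α} (hx : x ∈ s) (hf : BddAbove (f '' s)) :
    IsMaxOn f s x ↔ f x = sSup (f '' s) :=
  ⟨fun h =>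
    (IsGreatest.csSup_eq ⟨mem_image_of_mem f hx, forall_mem_image.2 (isMaxOn_iff.1 h)⟩).symm,
    fun h => isMaxOn_iff.2 fun _ hy => h ▸ le_csSup hf (mem_image_of_mem f hy)⟩

theorem exists_isMaxOn_add_iff {M N F : Type*} [AddCommMonoid M] [AddCommMonoid N]
    [PartialOrder N] [IsOrderedCancelAddMonoid N] [FunLike F M N] [AddHomClass F M N] (f : F)
    {s t : Set M} :
    (∃ z ∈ s + t, IsMaxOn f (s + t) z) ↔ (∃ x ∈ s, IsMaxOn f s x) ∧ ∃ y ∈ t, IsMaxOn f t y := by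
  simp only [isMaxOn_iff]
  constructor
  · rintro ⟨_, ⟨x, hx, y, hy, rfl⟩, hmax⟩
    refine ⟨⟨x, hx, fun x' hx' => ?_⟩, ⟨y, hy, fun y' hy' => ?_⟩⟩
    · have := hmax _ (add_mem_add hx' hy)
      rw [map_add, map_add] at this
      exact le_of_add_le_add_right this
    · have := hmax _ (add_mem_add hx hy')
      rw [map_add, map_add] at this
      exact le_of_add_le_add_left this
  · rintro ⟨⟨x, hx, hmx⟩, ⟨y, hy, hmy⟩⟩
    refine ⟨x + y, add_mem_add hx hy, ?_⟩
    rintro _ ⟨x', hx', y', hy', rfl⟩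
    rw [map_add, map_add]
    exact add_le_add (hmx x' hx') (hmy y' hy')

theorem exists_ne_zero_forall_le_of_notMem_interior {X : Type*} [TopologicalSpace X]
    [AddCommGroup X] [Module ℝ X] [IsTopologicalAddGroup X] [ContinuousSMul ℝ X] {s : Set X}
    (hs : Convex ℝ s) (hs' : (interior s).Nonempty) {x : X} (hx : x ∉ interior s) :
    ∃ f : StrongDual ℝ X, f ≠ 0 ∧ ∀ w ∈ s, f w ≤ f x := by
  obtain ⟨f, hf⟩ := geometric_hahn_banach_open_point hs.interior isOpen_interior hx
  obtain ⟨a, ha⟩ := hs'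
  refine ⟨f, fun h => (hf a ha).ne (by simp [h]), fun w hw => ?_⟩
  have hw : w ∈ closure (interior s) := by
    rw [hs.closure_interior_eq_closure_of_nonempty_interior ⟨a, ha⟩]
    exact subset_closure hw
  exact closure_minimal (fun y hy => (hf y hy).le) (isClosed_le f.continuous continuous_const) hw

theorem strictConvexSpace_strongDual (E : Type*) [NormedAddCommGroup E] [InnerProductSpace ℝ E]
    [CompleteSpace E] : StrictConvexSpace ℝ (StrongDual ℝ E) :=
  ((InnerProductSpace.toDual ℝ E).toIsometryEquiv.toRealLinearIsometryEquivOfMapZero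
    (map_zero (InnerProductSpace.toDual ℝ E))).strictConvexSpace_iff.1 inferInstance

section RenormBall

variable {E X : Type*} [NormedAddCommGroup E] [NormedSpace ℝ E]
  [NormedAddCommGroup X] [NormedSpace ℝ X]

theorem apply_le_norm_of_mem_closedBall_zero_one (f : StrongDual ℝ E) {x : E}
    (hx : x ∈ closedBall 0 1) : f x ≤ ‖f‖ :=
  (le_abs_self _).trans (f.unit_le_opNorm x (mem_closedBall_zero_iff.1 hx))

theorem sSup_image_closedBall_zero_one (f : StrongDual ℝ E) :
    sSup (f '' closedBall 0 1) = ‖f‖ := by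
  refine csSup_eq_of_forall_le_of_forall_lt_exists_gt
    ((nonempty_closedBall.2 zero_le_one).image f)
    (forall_mem_image.2 fun x => apply_le_norm_of_mem_closedBall_zero_one f) fun r hr => ?_
  obtain ⟨x, hx, hrx⟩ := f.exists_lt_apply_of_lt_opNorm hr
  have hx : ‖x‖ ≤ 1 := hx.le
  rcases lt_abs.1 hrx with h | h
  · exact ⟨f x, mem_image_of_mem f (mem_closedBall_zero_iff.2 hx), h⟩
  · exact ⟨f (-x), mem_image_of_mem f (mem_closedBall_zero_iff.2 (by rwa [norm_neg])), by
      rwa [map_neg]⟩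

theorem bddAbove_image_closedBall_zero_one (f : StrongDual ℝ E) :
    BddAbove (f '' closedBall 0 1) :=
  ⟨‖f‖, forall_mem_image.2 fun _ => apply_le_norm_of_mem_closedBall_zero_one f⟩

variable (T : E →L[ℝ] X)

def renormBall : Set X := closedBall 0 1 + T '' closedBall 0 1

theorem image_renormBall (f : StrongDual ℝ X) :
    f '' renormBall T = f '' closedBall 0 1 + (f.comp T) '' closedBall 0 1 := by
  rw [renormBall, image_add, image_image]
  rfl

theorem bddAbove_image_renormBall (f : StrongDual ℝ X) : BddAbove (f '' renormBall T) := by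
  rw [image_renormBall]
  exact (bddAbove_image_closedBall_zero_one f).add (bddAbove_image_closedBall_zero_one _)

theorem sSup_image_renormBall (f : StrongDual ℝ X) :
    sSup (f '' renormBall T) = ‖f‖ + ‖f.comp T‖ := by
  rw [image_renormBall, csSup_add ((nonempty_closedBall.2 zero_le_one).image f)
    (bddAbove_image_closedBall_zero_one f) ((nonempty_closedBall.2 zero_le_one).image _)
    (bddAbove_image_closedBall_zero_one _), sSup_image_closedBall_zero_one,
    sSup_image_closedBall_zero_one]

theorem closedBall_subset_renormBall : closedBall (0 : X) 1 ⊆ renormBall T := fun x hx =>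
  ⟨x, hx, 0, ⟨0, mem_closedBall_self zero_le_one, map_zero T⟩, add_zero x⟩

theorem zero_mem_interior_renormBall : (0 : X) ∈ interior (renormBall T) :=
  interior_mono (closedBall_subset_renormBall T)
    (mem_interior_iff_mem_nhds.2 (closedBall_mem_nhds 0 one_pos))

theorem isClosed_renormBall (hT : IsCompact (T '' closedBall 0 1)) : IsClosed (renormBall T) :=
  isClosed_closedBall.add_right_of_isCompact hT

theorem isBounded_renormBall : Bornology.IsBounded (renormBall T) :=
  isBounded_closedBall.add (T.lipschitz.isBounded_image isBounded_closedBall)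

theorem balanced_renormBall : Balanced ℝ (renormBall T) :=
  (balanced_closedBall_zero).add fun a ha => by
    rw [← image_smul_set]
    exact image_mono (balanced_closedBall_zero a ha)

theorem convex_renormBall : Convex ℝ (renormBall T) :=
  (convex_closedBall 0 1).add ((convex_closedBall 0 1).linear_image T.toLinearMap)

theorem exists_isMaxOn_closedBall_iff (f : StrongDual ℝ E) :
    (∃ x ∈ closedBall 0 1, IsMaxOn f (closedBall 0 1) x) ↔ ∃ x, ‖x‖ ≤ 1 ∧ f x = ‖f‖ := by
  have hbdd := bddAbove_image_closedBall_zero_one f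
  rw [← sSup_image_closedBall_zero_one f]
  constructor
  · rintro ⟨x, hx, h⟩
    exact ⟨x, mem_closedBall_zero_iff.1 hx, (isMaxOn_iff_eq_csSup hx hbdd).1 h⟩
  · rintro ⟨x, hx, h⟩
    have hx := mem_closedBall_zero_iff.2 hx
    exact ⟨x, hx, (isMaxOn_iff_eq_csSup hx hbdd).2 h⟩

theorem exists_isMaxOn_renormBall_iff (hT : IsCompact (T '' closedBall 0 1))
    (f : StrongDual ℝ X) :
    (∃ z ∈ renormBall T, IsMaxOn f (renormBall T) z) ↔ ∃ x, ‖x‖ ≤ 1 ∧ f x = ‖f‖ := by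
  rw [renormBall, exists_isMaxOn_add_iff f, exists_isMaxOn_closedBall_iff,
    and_iff_left (hT.exists_isMaxOn ((nonempty_closedBall.2 zero_le_one).image T)
      f.continuous.continuousOn)]

theorem exists_sSup_image_renormBall_eq_one_apply_eq_one {x : X} (hx : x ∈ renormBall T)
    (hx' : x ∉ interior (renormBall T)) :
    ∃ f : StrongDual ℝ X, sSup (f '' renormBall T) = 1 ∧ f x = 1 := by
  obtain ⟨f, hf0, hfx⟩ := exists_ne_zero_forall_le_of_notMem_interior (convex_renormBall T)
    ⟨0, zero_mem_interior_renormBall T⟩ hx'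
  have hsup : sSup (f '' renormBall T) = f x :=
    ((isMaxOn_iff_eq_csSup hx (bddAbove_image_renormBall T f)).1 (isMaxOn_iff.2 hfx)).symm
  have hpos : 0 < f x := by
    rw [← hsup, sSup_image_renormBall]
    exact add_pos_of_pos_of_nonneg (norm_pos_iff.2 hf0) (norm_nonneg _)
  refine ⟨(f x)⁻¹ • f, ?_, inv_mul_cancel₀ hpos.ne'⟩
  rw [sSup_image_renormBall, ContinuousLinearMap.smul_comp, norm_smul, norm_smul, ← mul_add,
    ← sSup_image_renormBall, hsup, Real.norm_of_nonneg (inv_nonneg.2 hpos.le),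
    inv_mul_cancel₀ hpos.ne']

end RenormBall

section Smoothness

variable {E X : Type*} [NormedAddCommGroup E] [InnerProductSpace ℝ E] [CompleteSpace E]
  [NormedAddCommGroup X] [NormedSpace ℝ X] {T : E →L[ℝ] X}

theorem sSup_image_renormBall_add_lt_two (hT : DenseRange T) {f g : StrongDual ℝ X}
    (hf : sSup (f '' renormBall T) = 1) (hg : sSup (g '' renormBall T) = 1) (hfg : f ≠ g) :
    sSup ((f + g) '' renormBall T) < 2 := by
  rw [sSup_image_renormBall] at hf hg ⊢
  by_contra! h
  have := strictConvexSpace_strongDual E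
  have hTray : SameRay ℝ (f.comp T) (g.comp T) := by
    have hle := norm_add_le (f.comp T) (g.comp T)
    rw [← ContinuousLinearMap.add_comp] at hle
    rw [sameRay_iff_norm_add, ← ContinuousLinearMap.add_comp]
    linarith [norm_add_le f g]
  have hinj : Function.Injective ((ContinuousLinearMap.compL ℝ E X ℝ).flip T) :=
    fun φ ψ h =>
      DFunLike.coe_injective (hT.equalizer φ.continuous ψ.continuous (congrArg DFunLike.coe h))
  have hray : SameRay ℝ f g := hinj.sameRay_map_iff.1 hTray
  refine hfg (hray.eq_of_norm_eq ?_)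
  -- `‖f‖ • g = ‖g‖ • f`, composed with `T`, gives `‖f‖ ‖T* g‖ = ‖g‖ ‖T* f‖`; with the
  -- normalizations `‖f‖ + ‖T* f‖ = ‖g‖ + ‖T* g‖ = 1` this forces `‖f‖ = ‖g‖`.
  have hnorm := congrArg (fun φ : StrongDual ℝ X => ‖φ.comp T‖) (sameRay_iff_norm_smul_eq.1 hray)
  simp only [ContinuousLinearMap.smul_comp, norm_smul, norm_norm] at hnorm
  linear_combination hnorm - ‖f‖ * hg + ‖g‖ * hf

theorem eq_of_sSup_image_renormBall_eq_one_of_apply_eq_one (hT : DenseRange T) {x : X}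
    (hx : x ∈ renormBall T) {f g : StrongDual ℝ X} (hf : sSup (f '' renormBall T) = 1)
    (hfx : f x = 1) (hg : sSup (g '' renormBall T) = 1) (hgx : g x = 1) : f = g := by
  by_contra hfg
  have h2 : 2 ≤ sSup ((f + g) '' renormBall T) :=
    calc (2 : ℝ) = (f + g) x := by rw [add_apply, hfx, hgx]; norm_num
      _ ≤ _ := le_csSup (bddAbove_image_renormBall T _) (mem_image_of_mem _ hx)
  exact (sSup_image_renormBall_add_lt_two hT hf hg hfg).not_ge h2

end Smoothness

section WeightedSeriesOperator

variable {X : Type*} [NormedAddCommGroup X] [NormedSpace ℝ X] {xseq : ℕ → X}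
  {T : lp (fun _ : ℕ => ℝ) 2 →L[ℝ] X}

theorem mem_range_of_forall_eq_tsum_smul
    (hT : ∀ a : lp (fun _ : ℕ => ℝ) 2, T a = ∑' n, (((2 : ℝ) ^ (n + 1))⁻¹ * a n) • xseq n)
    (n : ℕ) : xseq n ∈ range T := by
  refine ⟨lp.single 2 n ((2 : ℝ) ^ (n + 1)), ?_⟩
  rw [hT, tsum_eq_single n fun m hm => by simp [hm]]
  simp

theorem denseRange_of_forall_eq_tsum_smul
    (hxdense : ∀ y : X, ‖y‖ ≤ 1 → ∀ ε > 0, ∃ n, ‖y - xseq n‖ < ε)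
    (hT : ∀ a : lp (fun _ : ℕ => ℝ) 2, T a = ∑' n, (((2 : ℝ) ^ (n + 1))⁻¹ * a n) • xseq n) :
    DenseRange T := by
  have hball : closedBall (0 : X) 1 ⊆ closure (range T) := fun y hy =>
    Metric.mem_closure_iff.2 fun ε hε =>
      let ⟨n, hn⟩ := hxdense y (mem_closedBall_zero_iff.1 hy) ε hε
      ⟨xseq n, mem_range_of_forall_eq_tsum_smul hT n, by rwa [dist_eq_norm]⟩
  exact T.toLinearMap.denseRange_of_nonempty_interior_closure_range
    ⟨0, interior_mono hball (mem_interior_iff_mem_nhds.2 (closedBall_mem_nhds 0 one_pos))⟩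

theorem isCompact_image_closedBall_of_forall_eq_tsum_smul [CompleteSpace X]
    (hxb : ∀ n, ‖xseq n‖ ≤ 1)
    (hT : ∀ a : lp (fun _ : ℕ => ℝ) 2, T a = ∑' n, (((2 : ℝ) ^ (n + 1))⁻¹ * a n) • xseq n) :
    IsCompact (T '' closedBall 0 1) := by
  have hT' : ⇑T = fun a => ∑' n, a n • (((2 : ℝ) ^ (n + 1))⁻¹ • xseq n) := by
    ext a
    simp_rw [hT, smul_smul, mul_comm]
  have hsum : Summable fun n => ‖((2 : ℝ) ^ (n + 1))⁻¹ • xseq n‖ := by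
    refine .of_nonneg_of_le (fun _ => norm_nonneg _) (fun n => ?_)
      ((summable_nat_add_iff 1).2 summable_geometric_two)
    rw [norm_smul]
    exact (mul_le_of_le_one_right (norm_nonneg _) (hxb n)).trans_eq (by simp)
  rw [hT']
  exact isCompact_image_closedBall_tsum_smul (by norm_num) hsum

end WeightedSeriesOperator

/-- Debs–Godefroy–Saint Raymond renorming lemma.  Let `X` be a separable Banach space,
`(xseq n)` a dense sequence in its unit ball, and `T : ℓ₂ → X` the bounded operator
`T a = ∑ₙ 2^{-(n+1)} (a n) • xseq n`.  Let `‖·‖ₛ` be the equivalent norm on `X` whose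
unit ball is `V = B_X + T(B_{ℓ₂})`; its dual norm is `f ↦ sSup (f '' V)`.  Then:
(i) `V` is closed, bounded, balanced and convex with nonempty interior;
(ii) the dual norm satisfies `sSup (f '' V) = ‖f‖ + ‖T* f‖` for all `f ∈ X*`;
(iii) a functional attains its maximum on `V` iff it attains its norm on `B_X`, i.e.
`NA(X, ‖·‖ₛ) = NA(X, ‖·‖)`;
(iv) the dual norm is strictly convex, hence `(X, ‖·‖ₛ)` is smooth (each point of the
boundary of `V` has a unique supporting functional normalized for the new norm). -/
theorem smooth_renorming_preserving_norm_attaining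
    (X : Type*) [NormedAddCommGroup X] [NormedSpace ℝ X] [CompleteSpace X]
    (xseq : ℕ → X) (hxb : ∀ n, ‖xseq n‖ ≤ 1)
    (hxdense : ∀ y : X, ‖y‖ ≤ 1 → ∀ ε > 0, ∃ n, ‖y - xseq n‖ < ε)
    (T : lp (fun _ : ℕ => ℝ) 2 →L[ℝ] X)
    (hT : ∀ a : lp (fun _ : ℕ => ℝ) 2, T a = ∑' n, (((2 : ℝ) ^ (n + 1))⁻¹ * a n) • xseq n) :
    letI V : Set X := Metric.closedBall (0 : X) 1 + T '' Metric.closedBall 0 1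
    (IsClosed V ∧ Bornology.IsBounded V ∧ Balanced ℝ V ∧ Convex ℝ V ∧
      (interior V).Nonempty) ∧
    (∀ f : StrongDual ℝ X, sSup (f '' V) = ‖f‖ + ‖f.comp T‖) ∧
    (∀ f : StrongDual ℝ X,
      (∃ z ∈ V, ∀ w ∈ V, f w ≤ f z) ↔ (∃ x : X, ‖x‖ ≤ 1 ∧ f x = ‖f‖)) ∧
    ((∀ f g : StrongDual ℝ X, sSup (f '' V) = 1 → sSup (g '' V) = 1 → f ≠ g →
        sSup ((f + g) '' V) < 2) ∧
      (∀ x ∈ V, x ∉ interior V →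
        ∃! f : StrongDual ℝ X, sSup (f '' V) = 1 ∧ f x = 1)) := by
  have hcompact := isCompact_image_closedBall_of_forall_eq_tsum_smul hxb hT
  have hdense := denseRange_of_forall_eq_tsum_smul hxdense hT
  refine ⟨⟨isClosed_renormBall T hcompact, isBounded_renormBall T, balanced_renormBall T,
      convex_renormBall T, ⟨0, zero_mem_interior_renormBall T⟩⟩,
    sSup_image_renormBall T, fun f => ?_,
    fun f g hf hg hfg => sSup_image_renormBall_add_lt_two hdense hf hg hfg, fun x hx hx' => ?_⟩
  · simpa only [isMaxOn_iff, renormBall] using exists_isMaxOn_renormBall_iff T hcompact f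
  · obtain ⟨f, hf⟩ := exists_sSup_image_renormBall_eq_one_apply_eq_one T hx hx'
    exact ⟨f, hf, fun g hg =>
      eq_of_sSup_image_renormBall_eq_one_of_apply_eq_one hdense hx hg.1 hg.2 hf.1 hf.2⟩
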